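/- For 0 < r < 1, the operator h₃ := ∂ρ/∂φ − (1/2)(ρL₃ + L₃ρ) equals h₃ᵣ(r) · [[0, i·sinθ·e^{-iφ}],[-i·sinθ·e^{iφ}, 0]], where h₃ᵣ(r) = (6r − 4r³ + 3(1-r²)·log((1-r)/(1+r)))/(8r²). -/

import Mathlib

open Real Matrix

noncomputable def rho (r θ φ : ℝ) : Matrix (Fin 2) (Fin 2) ℂ :=
  (1 / 2 : ℂ) •
    !![(1 + r * Real.cos θ : ℂ), r * Complex.exp (-Complex.I * φ) * Real.sin θ;
       r * Complex.exp (Complex.I * φ) * Real.sin θ, (1 - r * Real.cos θ : ℂ)]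

noncomputable def L3 (r θ φ : ℝ) : Matrix (Fin 2) (Fin 2) ℂ :=
  ((3 / (4 * r ^ 2) * (2 * r + (1 - r ^ 2) * Real.log ((1 - r) / (1 + r))) : ℝ) : ℂ) •
    !![0, -Complex.I * Complex.exp (-Complex.I * φ) * Real.sin θ;
       Complex.I * Complex.exp (Complex.I * φ) * Real.sin θ, 0]

/-- Entrywise derivative of `ρ` with respect to `φ`. -/
noncomputable def dRhodPhi (r θ φ : ℝ) : Matrix (Fin 2) (Fin 2) ℂ :=
  Matrix.of fun i j => deriv (fun φ' => rho r θ φ' i j) φ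

noncomputable def h3r (r : ℝ) : ℝ :=
  (6 * r - 4 * r ^ 3 + 3 * (1 - r ^ 2) * Real.log ((1 - r) / (1 + r))) / (8 * r ^ 2)

/-!
Writing `ρ = (1 + r n·σ)/2` with Bloch vector `n`, both `∂ρ/∂φ` and `L₃` are multiples of
`T = ∂(n·σ)/∂φ`. Since `∂n/∂φ ⟂ n`, the Pauli combinations `n·σ` and `T` anticommute, so
`ρT + Tρ = T`; hence `h₃ = (r - c)/2 · T`, where `c` is the scalar factor of `L₃`, and
`(c - r)/2 = h₃ᵣ(r)`.
-/

noncomputable def tangentPhi (θ φ : ℝ) : Matrix (Fin 2) (Fin 2) ℂ :=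
  !![0, -Complex.I * Complex.exp (-Complex.I * φ) * Real.sin θ;
     Complex.I * Complex.exp (Complex.I * φ) * Real.sin θ, 0]

noncomputable def l3Coeff (r : ℝ) : ℝ :=
  3 / (4 * r ^ 2) * (2 * r + (1 - r ^ 2) * Real.log ((1 - r) / (1 + r)))

lemma L3_eq_smul_tangentPhi (r θ φ : ℝ) : L3 r θ φ = (l3Coeff r : ℂ) • tangentPhi θ φ := rfl

lemma h3r_eq_l3Coeff_sub {r : ℝ} (hr : r ≠ 0) : h3r r = (l3Coeff r - r) / 2 := by
  rw [h3r, l3Coeff]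
  field_simp
  ring

lemma hasDerivAt_cexp_const_mul_ofReal (c : ℂ) (x : ℝ) :
    HasDerivAt (fun t : ℝ => Complex.exp (c * t)) (c * Complex.exp (c * x)) x := by
  simpa [mul_comm] using (((hasDerivAt_id (x : ℂ)).const_mul c).cexp).comp_ofReal

lemma dRhodPhi_eq_smul_tangentPhi (r θ φ : ℝ) :
    dRhodPhi r θ φ = ((r / 2 : ℝ) : ℂ) • tangentPhi θ φ := by
  have hderiv (c : ℂ) : deriv (fun t : ℝ => (r * Real.sin θ / 2 : ℂ) * Complex.exp (c * t)) φ =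
      (r * Real.sin θ / 2 : ℂ) * (c * Complex.exp (c * φ)) :=
    ((hasDerivAt_cexp_const_mul_ofReal c φ).const_mul _).deriv
  have h01 : (fun t => rho r θ t 0 1) =
      fun t : ℝ => (r * Real.sin θ / 2 : ℂ) * Complex.exp (-Complex.I * t) := by
    funext t; simp [rho]; ring
  have h10 : (fun t => rho r θ t 1 0) =
      fun t : ℝ => (r * Real.sin θ / 2 : ℂ) * Complex.exp (Complex.I * t) := by
    funext t; simp [rho]; ring
  ext i j
  fin_cases i <;> fin_cases j
  · simp [dRhodPhi, rho, tangentPhi]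
  · simp only [dRhodPhi, Matrix.of_apply, Fin.zero_eta, Fin.mk_one, h01, hderiv]
    simp [tangentPhi]; ring
  · simp only [dRhodPhi, Matrix.of_apply, Fin.zero_eta, Fin.mk_one, h10, hderiv]
    simp [tangentPhi]; ring
  · simp [dRhodPhi, rho, tangentPhi]

lemma rho_mul_tangentPhi_add_tangentPhi_mul_rho (r θ φ : ℝ) :
    rho r θ φ * tangentPhi θ φ + tangentPhi θ φ * rho r θ φ = tangentPhi θ φ := by
  ext i j
  fin_cases i <;> fin_cases j <;> simp [rho, tangentPhi] <;> ring

theorem h3_formula_general (r θ φ : ℝ) (hr : 0 < r) :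
    dRhodPhi r θ φ - (1 / 2 : ℂ) • (rho r θ φ * L3 r θ φ + L3 r θ φ * rho r θ φ) =
      ((h3r r : ℝ) : ℂ) •
        !![0, Complex.I * Real.sin θ * Complex.exp (-Complex.I * φ);
           -Complex.I * Real.sin θ * Complex.exp (Complex.I * φ), 0] := by
  have hneg : !![0, Complex.I * Real.sin θ * Complex.exp (-Complex.I * φ);
      -Complex.I * Real.sin θ * Complex.exp (Complex.I * φ), 0] = -tangentPhi θ φ := by
    ext i j
    fin_cases i <;> fin_cases j <;> simp [tangentPhi] <;> ring
  rw [hneg, dRhodPhi_eq_smul_tangentPhi, L3_eq_smul_tangentPhi, Matrix.mul_smul, Matrix.smul_mul,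
    ← smul_add, rho_mul_tangentPhi_add_tangentPhi_mul_rho, h3r_eq_l3Coeff_sub hr.ne']
  push_cast
  module

theorem h3_formula (r θ φ : ℝ) (hr : 0 < r) (hr1 : r < 1) :
    dRhodPhi r θ φ - (1 / 2 : ℂ) • (rho r θ φ * L3 r θ φ + L3 r θ φ * rho r θ φ) =
      ((h3r r : ℝ) : ℂ) •
        !![0, Complex.I * Real.sin θ * Complex.exp (-Complex.I * φ);
           -Complex.I * Real.sin θ * Complex.exp (Complex.I * φ), 0] :=
  h3_formula_general r θ φ hr
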